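/- arXiv:0708.2895 — 2 statements merged into one kernel-verified Lean document; each statement's English description precedes it below -/
import Mathlib

section
/- Let α be a complex random variable, let v = (v₁,…,vₙ) be a tuple of complex numbers, and let r > 0. Then p_{r,α}(v) ≤ e^{πr²}·P₁(v). -/
open MeasureTheory ProbabilityTheory Filter

noncomputable section

/-- The operator (spectral) norm of an `n × n` complex matrix, i.e. the supremum of `‖M v‖`
over unit vectors `v` in Euclidean space. -/
def opNorm {n : ℕ} (M : Matrix (Fin n) (Fin n) ℂ) : ℝ :=
  ‖(Matrix.toEuclideanCLM (𝕜 := ℂ) M : EuclideanSpace ℂ (Fin n) →L[ℂ] EuclideanSpace ℂ (Fin n))‖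

/-- The least singular value of an `n × n` complex matrix: `σ_n(M) = inf_{‖v‖ = 1} ‖M v‖`. -/
def sigmaMin {n : ℕ} (M : Matrix (Fin n) (Fin n) ℂ) : ℝ :=
  ⨅ v : {v : EuclideanSpace ℂ (Fin n) // ‖v‖ = 1},
    ‖Matrix.toEuclideanCLM (𝕜 := ℂ) M v.1‖

open Classical in
/-- The empirical spectral distribution of an `n × n` complex matrix:
`ESD M s t = (1/n) * #{eigenvalues λ (with multiplicity) : Re λ ≤ s, Im λ ≤ t}`,
eigenvalues with multiplicity being the roots of the characteristic polynomial. -/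
def ESD {n : ℕ} (M : Matrix (Fin n) (Fin n) ℂ) (s t : ℝ) : ℝ :=
  ((M.charpoly.roots.filter (fun z => z.re ≤ s ∧ z.im ≤ t)).card : ℝ) / n

/-- The distribution function of the uniform probability measure on the unit disk:
`μ_∞(s,t) = (1/π) · mes {z : |z| ≤ 1, Re z ≤ s, Im z ≤ t}`. -/
def unifDiskCDF (s t : ℝ) : ℝ :=
  (volume {z : ℂ | ‖z‖ ≤ 1 ∧ z.re ≤ s ∧ z.im ≤ t}).toReal / Real.pi

/-- The law (on `ℂ`) of a Bernoulli random variable which equals `1` with probability `ρ`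
and `0` with probability `1 - ρ`. -/
def bernoulliLawC (ρ : ℝ) : Measure ℂ :=
  ENNReal.ofReal ρ • Measure.dirac 1 + ENNReal.ofReal (1 - ρ) • Measure.dirac 0

/-- The law of `α · I_μ`, the product of a random variable with law `ν` and an independent
Bernoulli variable equal to `1` with probability `μ` and `0` otherwise. -/
def bernoulliMix (ν : Measure ℂ) (μ : ℝ) : Measure ℂ :=
  ENNReal.ofReal μ • ν + ENNReal.ofReal (1 - μ) • Measure.dirac 0

/-- The law of `α^{(μ)} := (α₁ - α₂) · I_{μ/2}` where `α₁, α₂` are i.i.d. with law `ν` and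
`I_{μ/2}` is an independent Bernoulli variable equal to `1` with probability `μ/2`. -/
def diffLaw (ν : Measure ℂ) (μ : ℝ) : Measure ℂ :=
  ENNReal.ofReal (μ / 2) • Measure.map (fun p : ℂ × ℂ => p.1 - p.2) (ν.prod ν)
    + ENNReal.ofReal (1 - μ / 2) • Measure.dirac 0

/-- The concentration probability `P_μ(v) := E exp(-π |W_{α^{(μ)}}(v)|²)`, where
`W_{α^{(μ)}}(v) = ∑ i, v i · x i` with `x i` i.i.d. copies of `α^{(μ)}` and `ν` is the law
of `α`. -/
def concProb {ι : Type*} [Fintype ι] (ν : Measure ℂ) (μ : ℝ) (v : ι → ℂ) : ℝ :=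
  ∫ x, Real.exp (-Real.pi * ‖∑ i, v i * x i‖ ^ 2) ∂(Measure.pi fun _ : ι => diffLaw ν μ)

/-- The small ball probability `p_{r,α}(v) := sup_z P(W_α(v) ∈ B(z,r))`, where
`W_α(v) = ∑ i, v i · x i` with `x i` i.i.d. copies of a random variable with law `ν`. -/
def smallBall {ι : Type*} [Fintype ι] (ν : Measure ℂ) (v : ι → ℂ) (r : ℝ) : ℝ :=
  ⨆ z : ℂ, ((Measure.pi fun _ : ι => ν) {x | dist (∑ i, v i * x i) z ≤ r}).toReal

/-- The characteristic function `f(z) := |E e(Re(α z))|²` where `e(t) = e^{2π√-1 t}` and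
`ν` is the law of `α`. -/
def charFn (ν : Measure ℂ) (z : ℂ) : ℝ :=
  ‖∫ w, Complex.exp (2 * Real.pi * Complex.I * ((w * z).re : ℂ)) ∂ν‖ ^ 2

/-- The `α`-norm `‖w‖_α := (E ‖Re(w (α₁ - α₂))‖_{ℝ/ℤ}²)^{1/2}` where `α₁, α₂` are i.i.d.
with law `ν`, and `‖t‖_{ℝ/ℤ} = |t - round t|` is the distance to the nearest integer. -/
def alphaNorm (ν : Measure ℂ) (w : ℂ) : ℝ :=
  Real.sqrt (∫ p : ℂ × ℂ,
    |(w * (p.1 - p.2)).re - (round ((w * (p.1 - p.2)).re) : ℝ)| ^ 2 ∂(ν.prod ν))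

/-- The symmetric generalized arithmetic progression with generators `v i` and dimensions
`L i`: the set of `∑ i, m i • v i` with `m i ∈ ℤ`, `|m i| ≤ L i`. -/
def GAPset {r : ℕ} (v : Fin r → ℂ) (L : Fin r → ℝ) : Set ℂ :=
  {z | ∃ m : Fin r → ℤ, (∀ i, |(m i : ℝ)| ≤ L i) ∧ z = ∑ i, (m i : ℂ) * v i}

/-- The dispersion `D(Q) := #Q / #(Q ∩ B(0,1))` of a finite set `Q ⊆ ℂ`. -/
def dispersion (Q : Set ℂ) : ℝ :=
  (Q.ncard : ℝ) / ((Q ∩ Metric.closedBall 0 1).ncard : ℝ)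

/-- A complex random variable `α` has `κ`-controlled second moment if `κ ≥ 1`,
`E|α|² ≤ κ`, and `E[(Re(zα - w))² 1_{|α| ≤ κ}] ≥ Re(z)²/κ` for all `z w : ℂ`. -/
def HasControlledSecondMoment {Ω : Type*} [MeasureSpace Ω] (α : Ω → ℂ) (κ : ℝ) : Prop :=
  1 ≤ κ ∧ Integrable (fun ω => ‖α ω‖ ^ 2) ∧ (∫ ω, ‖α ω‖ ^ 2) ≤ κ ∧
    ∀ z w : ℂ, z.re ^ 2 / κ ≤ ∫ ω in {ω | ‖α ω‖ ≤ κ}, ((z * α ω - w).re) ^ 2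

end

/-!
Markov's inequality for the weight `exp (-π |w - z|²)` bounds `P(W_α(v) ∈ B(z, r))` by
`e^{πr²} E exp (-π |W_α(v) - z|²)`. The Gaussian is its own Fourier transform, so a Gaussian
expectation `E exp (-π |X|²)` equals `∫ exp (-π |ξ|²) φ_X(2πξ) dξ`; hence it increases from `X`
to `Y` whenever `|φ_X| ≤ Re φ_Y`. By independence `|φ_{W_α(v) - z}| = ∏ |φ_α(v̄ᵢ ·)|`, and
`φ_{α^{(1)}} = (1 + |φ_α|²)/2 ≥ |φ_α|`, so the comparison applies with `Y = W_{α^{(1)}}(v)`,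
whose Gaussian expectation is `P₁(v)`.
-/

open Complex Real ComplexConjugate
open scoped RealInnerProductSpace

section Gaussian

variable {V : Type*} [NormedAddCommGroup V] [InnerProductSpace ℝ V] [FiniteDimensional ℝ V]
  [MeasurableSpace V] [BorelSpace V]

theorem gaussian_eq_integral_gaussian_mul_cexp_inner (x : V) :
    (Real.exp (-π * ‖x‖ ^ 2) : ℂ)
      = ∫ ξ : V, Real.exp (-π * ‖ξ‖ ^ 2) * cexp (⟪x, (2 * π) • ξ⟫ * I) := by
  have h := fourier_gaussian_innerProductSpace' (V := V) (b := π) (by simpa using Real.pi_pos) x 0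
  have hπ : (π : ℂ) ≠ 0 := by exact_mod_cast Real.pi_ne_zero
  rw [Real.fourier_eq'] at h
  simp only [inner_zero_right, mul_zero, ofReal_zero, zero_mul, Complex.exp_zero, one_smul,
    div_self hπ, one_cpow, one_mul, sub_zero] at h
  convert h.symm using 1
  · rw [ofReal_exp]
    congr 1
    field_simp
    push_cast
    ring
  · congr 1 with ξ
    rw [ofReal_exp, ← Complex.exp_add, inner_smul_right]
    push_cast
    ring_nf

theorem integrable_gaussian : Integrable fun ξ : V => Real.exp (-π * ‖ξ‖ ^ 2) := by
  have h := (GaussianFourier.integrable_cexp_neg_mul_sq_norm_add (V := V) (b := π)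
    (by simpa using Real.pi_pos) 0 0).norm
  refine h.congr (.of_forall fun ξ => ?_)
  simp [Complex.norm_exp, ← ofReal_pow]

theorem integral_gaussian_eq_integral_gaussian_mul_charFun (μ : Measure V) [IsFiniteMeasure μ] :
    ((∫ x, Real.exp (-π * ‖x‖ ^ 2) ∂μ : ℝ) : ℂ)
      = ∫ ξ : V, Real.exp (-π * ‖ξ‖ ^ 2) * charFun μ ((2 * π) • ξ) := by
  have hint : Integrable (fun p : V × V =>
      (Real.exp (-π * ‖p.2‖ ^ 2) : ℂ) * cexp (⟪p.1, (2 * π) • p.2⟫ * I)) (μ.prod volume) := by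
    refine ((integrable_const (1 : ℝ)).mul_prod integrable_gaussian).mono' (by fun_prop)
      (.of_forall fun p => ?_)
    rw [norm_mul, norm_exp_ofReal_mul_I, norm_real, Real.norm_of_nonneg (by positivity)]
    simp
  calc ((∫ x, Real.exp (-π * ‖x‖ ^ 2) ∂μ : ℝ) : ℂ)
      = ∫ x, (∫ ξ : V, Real.exp (-π * ‖ξ‖ ^ 2) * cexp (⟪x, (2 * π) • ξ⟫ * I)) ∂μ := by
        rw [← integral_complex_ofReal]
        exact integral_congr_ae (.of_forall gaussian_eq_integral_gaussian_mul_cexp_inner)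
    _ = ∫ ξ : V, (∫ x, Real.exp (-π * ‖ξ‖ ^ 2) * cexp (⟪x, (2 * π) • ξ⟫ * I) ∂μ) :=
        integral_integral_swap hint
    _ = _ := by simp_rw [integral_const_mul, charFun_apply]

theorem integrable_gaussian_mul_charFun (μ : Measure V) [IsFiniteMeasure μ] :
    Integrable fun ξ : V => (Real.exp (-π * ‖ξ‖ ^ 2) : ℂ) * charFun μ ((2 * π) • ξ) :=
  integrable_gaussian.ofReal.mul_bdd (c := μ.real Set.univ) (by fun_prop)
    (.of_forall fun _ => norm_charFun_le _)

theorem integral_gaussian_le_of_norm_charFun_le {μ μ' : Measure V} [IsFiniteMeasure μ]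
    [IsFiniteMeasure μ'] (h : ∀ t, ‖charFun μ t‖ ≤ (charFun μ' t).re) :
    ∫ x, Real.exp (-π * ‖x‖ ^ 2) ∂μ ≤ ∫ x, Real.exp (-π * ‖x‖ ^ 2) ∂μ' := by
  set F : Measure V → V → ℂ := fun ρ ξ => Real.exp (-π * ‖ξ‖ ^ 2) * charFun ρ ((2 * π) • ξ)
  calc ∫ x, Real.exp (-π * ‖x‖ ^ 2) ∂μ = (∫ ξ, F μ ξ).re := by
        rw [← integral_gaussian_eq_integral_gaussian_mul_charFun, ofReal_re]
    _ ≤ ∫ ξ, ‖F μ ξ‖ := (re_le_norm _).trans (norm_integral_le_integral_norm _)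
    _ ≤ ∫ ξ, (F μ' ξ).re := by
        refine integral_mono (integrable_gaussian_mul_charFun μ).norm
          (integrable_gaussian_mul_charFun μ').re fun ξ => ?_
        simp only [F, norm_mul, norm_real, re_ofReal_mul, Real.norm_of_nonneg (Real.exp_nonneg _)]
        gcongr
        exact h _
    _ = (∫ ξ, F μ' ξ).re := integral_re (integrable_gaussian_mul_charFun μ')
    _ = ∫ x, Real.exp (-π * ‖x‖ ^ 2) ∂μ' := by
        rw [← integral_gaussian_eq_integral_gaussian_mul_charFun, ofReal_re]

theorem integral_gaussian_sub_le_of_norm_charFun_le {μ μ' : Measure V} [IsFiniteMeasure μ]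
    [IsFiniteMeasure μ'] (h : ∀ t, ‖charFun μ t‖ ≤ (charFun μ' t).re) (z : V) :
    ∫ x, Real.exp (-π * ‖x - z‖ ^ 2) ∂μ ≤ ∫ x, Real.exp (-π * ‖x‖ ^ 2) ∂μ' := by
  have h' : ∀ t, ‖charFun (μ.map (· + -z)) t‖ ≤ (charFun μ' t).re := fun t => by
    rw [charFun_map_add_const, norm_mul, norm_exp_ofReal_mul_I, mul_one]
    exact h t
  have key := integral_gaussian_le_of_norm_charFun_le h'
  rw [integral_map (measurable_add_const (-z)).aemeasurable
    (by fun_prop : Continuous fun x : V => Real.exp (-π * ‖x‖ ^ 2)).aestronglyMeasurable] at key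
  simpa only [← sub_eq_add_neg] using key

end Gaussian

theorem measureReal_closedBall_le_exp_mul_integral_gaussian {E : Type*} [NormedAddCommGroup E]
    [MeasurableSpace E] [OpensMeasurableSpace E] (μ : Measure E) [IsFiniteMeasure μ]
    (z : E) (r : ℝ) :
    μ.real (Metric.closedBall z r)
      ≤ Real.exp (π * r ^ 2) * ∫ x, Real.exp (-π * ‖x - z‖ ^ 2) ∂μ := by
  have hint : Integrable (fun x => Real.exp (-π * ‖x - z‖ ^ 2)) μ := by
    have hcont : Continuous fun x : E => Real.exp (-π * ‖x - z‖ ^ 2) := by fun_prop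
    refine (integrable_const (1 : ℝ)).mono' hcont.measurable.aestronglyMeasurable
      (.of_forall fun x => ?_)
    rw [Real.norm_of_nonneg (Real.exp_nonneg _), Real.exp_le_one_iff]
    nlinarith [Real.pi_pos, sq_nonneg ‖x - z‖]
  have hmarkov := mul_meas_ge_le_integral_of_nonneg (.of_forall fun x => (Real.exp_pos _).le)
    hint (Real.exp (-π * r ^ 2))
  have hsub :
      Metric.closedBall z r ⊆ {x | Real.exp (-π * r ^ 2) ≤ Real.exp (-π * ‖x - z‖ ^ 2)} := by
    intro x hx
    rw [mem_closedBall_iff_norm] at hx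
    simp only [Set.mem_ofPred_eq, Real.exp_le_exp]
    have := pow_le_pow_left₀ (norm_nonneg _) hx 2
    nlinarith [Real.pi_pos]
  calc μ.real (Metric.closedBall z r)
      ≤ μ.real {x | Real.exp (-π * r ^ 2) ≤ Real.exp (-π * ‖x - z‖ ^ 2)} := measureReal_mono hsub
    _ = Real.exp (π * r ^ 2) * (Real.exp (-π * r ^ 2) *
          μ.real {x | Real.exp (-π * r ^ 2) ≤ Real.exp (-π * ‖x - z‖ ^ 2)}) := by
        rw [← mul_assoc, ← Real.exp_add, neg_mul, add_neg_cancel, Real.exp_zero, one_mul]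
    _ ≤ Real.exp (π * r ^ 2) * ∫ x, Real.exp (-π * ‖x - z‖ ^ 2) ∂μ :=
        mul_le_mul_of_nonneg_left hmarkov (Real.exp_pos _).le

section CharFun

variable {E : Type*} [NormedAddCommGroup E] [InnerProductSpace ℝ E] [MeasurableSpace E]
  [BorelSpace E] [SecondCountableTopology E]

theorem charFun_map_sum_pi {ι : Type*} [Fintype ι] {X : ι → Type*}
    [∀ i, MeasurableSpace (X i)] (μ : ∀ i, Measure (X i)) [∀ i, SigmaFinite (μ i)]
    {f : ∀ i, X i → E} (hf : ∀ i, Measurable (f i)) (t : E) :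
    charFun ((Measure.pi μ).map fun x => ∑ i, f i (x i)) t
      = ∏ i, charFun ((μ i).map (f i)) t := by
  have hsum : Measurable fun x : (∀ i, X i) => ∑ i, f i (x i) :=
    Finset.measurable_fun_sum _ fun i _ => (hf i).comp (measurable_pi_apply i)
  rw [charFun_apply, integral_map hsum.aemeasurable (by fun_prop)]
  simp_rw [sum_inner, ofReal_sum, Finset.sum_mul, Complex.exp_sum]
  rw [integral_fintype_prod_eq_prod (f := fun i y => cexp (⟪f i y, t⟫ * I))]
  congr with i
  rw [charFun_apply, integral_map (hf i).aemeasurable (by fun_prop)]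

theorem charFun_map_sub_prod_self (μ : Measure E) [IsFiniteMeasure μ] (t : E) :
    charFun ((μ.prod μ).map fun p => p.1 - p.2) t = (‖charFun μ t‖ ^ 2 : ℝ) := by
  have hsplit : ∀ p : E × E,
      cexp (⟪p.1 - p.2, t⟫ * I) = cexp (⟪p.1, t⟫ * I) * cexp (⟪p.2, -t⟫ * I) := fun p => by
    rw [inner_sub_left, inner_neg_right, ← Complex.exp_add]
    push_cast
    ring_nf
  rw [charFun_apply, integral_map (by fun_prop) (by fun_prop)]
  simp_rw [hsplit]
  rw [integral_prod_mul (fun x => cexp (⟪x, t⟫ * I)) (fun x => cexp (⟪x, -t⟫ * I)),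
    ← charFun_apply, ← charFun_apply, charFun_neg, mul_conj, normSq_eq_norm_sq]

end CharFun

theorem charFun_map_const_mul (μ : Measure ℂ) (c t : ℂ) :
    charFun (μ.map (c * ·)) t = charFun μ (conj c * t) := by
  rw [charFun_apply, charFun_apply, integral_map (measurable_const_mul c).aemeasurable
    (by fun_prop)]
  congr with w
  rw [Complex.inner, Complex.inner, map_mul]
  ring_nf

instance isFiniteMeasure_diffLaw (ν : Measure ℂ) [IsFiniteMeasure ν] (μ : ℝ) :
    IsFiniteMeasure (diffLaw ν μ) :=
  ⟨by simp [diffLaw, ENNReal.mul_lt_top, measure_lt_top]⟩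

theorem charFun_diffLaw (ν : Measure ℂ) [IsFiniteMeasure ν] {μ : ℝ} (hμ₀ : 0 ≤ μ) (hμ₂ : μ ≤ 2)
    (t : ℂ) :
    charFun (diffLaw ν μ) t = (μ / 2 * ‖charFun ν t‖ ^ 2 + (1 - μ / 2) : ℝ) := by
  have hint : ∀ (ρ : Measure ℂ) [IsFiniteMeasure ρ], Integrable (fun x => cexp (⟪x, t⟫ * I)) ρ :=
    fun ρ _ => (integrable_const (1 : ℝ)).mono' (by fun_prop)
      (.of_forall fun x => (norm_exp_ofReal_mul_I _).le)
  rw [charFun_apply, diffLaw, integral_add_measure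
    ((hint _).smul_measure ENNReal.ofReal_ne_top)
    ((hint _).smul_measure ENNReal.ofReal_ne_top),
    integral_smul_measure, integral_smul_measure, integral_dirac, ← charFun_apply,
    charFun_map_sub_prod_self, ENNReal.toReal_ofReal (by linarith),
    ENNReal.toReal_ofReal (by linarith)]
  simp

theorem norm_charFun_map_sum_mul_le_re_charFun_diffLaw {ι : Type*} [Fintype ι]
    (ν : Measure ℂ) [IsFiniteMeasure ν] (c : ι → ℂ) (t : ℂ) :
    ‖charFun ((Measure.pi fun _ : ι => ν).map fun x => ∑ i, c i * x i) t‖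
      ≤ (charFun ((Measure.pi fun _ : ι => diffLaw ν 1).map fun x => ∑ i, c i * x i) t).re := by
  rw [charFun_map_sum_pi _ (fun i => measurable_const_mul (c i)),
    charFun_map_sum_pi _ (fun i => measurable_const_mul (c i))]
  simp only [charFun_map_const_mul, charFun_diffLaw ν zero_le_one one_le_two]
  rw [norm_prod, ← ofReal_prod, ofReal_re]
  refine Finset.prod_le_prod (fun _ _ => norm_nonneg _) fun i _ => ?_
  nlinarith [sq_nonneg (‖charFun ν (conj (c i) * t)‖ - 1)]

theorem smallBall_le_concProb_general
    {Ω : Type*} [MeasureSpace Ω] [IsProbabilityMeasure (ℙ : Measure Ω)]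
    (α : Ω → ℂ)
    (n : ℕ) (v : Fin n → ℂ) (r : ℝ) :
    smallBall (Measure.map α ℙ) v r
      ≤ Real.exp (Real.pi * r ^ 2) * concProb (Measure.map α ℙ) 1 v := by
  set ν := Measure.map α ℙ
  set W : (Fin n → ℂ) → ℂ := fun x => ∑ i, v i * x i
  have hW : Measurable W := by fun_prop
  refine ciSup_le fun z => ?_
  calc ((Measure.pi fun _ => ν) {x | dist (W x) z ≤ r}).toReal
      = ((Measure.pi fun _ => ν).map W).real (Metric.closedBall z r) :=
        (map_measureReal_apply hW measurableSet_closedBall).symm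
    _ ≤ Real.exp (π * r ^ 2) *
          ∫ y, Real.exp (-π * ‖y - z‖ ^ 2) ∂(Measure.pi fun _ => ν).map W :=
        measureReal_closedBall_le_exp_mul_integral_gaussian _ z r
    _ ≤ Real.exp (π * r ^ 2) *
          ∫ y, Real.exp (-π * ‖y‖ ^ 2) ∂(Measure.pi fun _ => diffLaw ν 1).map W := by
        gcongr
        exact integral_gaussian_sub_le_of_norm_charFun_le
          (norm_charFun_map_sum_mul_le_re_charFun_diffLaw ν v) z
    _ = Real.exp (π * r ^ 2) * concProb ν 1 v := by
        rw [integral_map hW.aemeasurable (by fun_prop)]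
        rfl

/-- **Concentration probability bounds small ball probability** (Lemma 4.3). -/
theorem smallBall_le_concProb
    {Ω : Type*} [MeasureSpace Ω] [IsProbabilityMeasure (ℙ : Measure Ω)]
    (α : Ω → ℂ) (hmeas : Measurable α)
    (n : ℕ) (v : Fin n → ℂ) (r : ℝ) (hr : 0 < r) :
    smallBall (Measure.map α ℙ) v r
      ≤ Real.exp (Real.pi * r ^ 2) * concProb (Measure.map α ℙ) 1 v :=
  smallBall_le_concProb_general α n v r
end

section
/- Let κ ≥ 1 and let α be a complex random variable with κ-controlled second moment. Then there exist constants c > 0 and c' > 0, depending only on κ, such that ‖z‖_α ≥ c'·|Re(z)| for all z ∈ ℂ with |z| ≤ c. -/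
open MeasureTheory ProbabilityTheory Filter

/-!
On the ball `|a| ≤ κ` the control hypothesis gives `E[Re(a)² ; |a| ≤ κ] ≥ 1/κ`, hence
`P(|α| ≤ κ) ≥ 1/κ³`. When `|z| ≤ 1/(5κ)` and both `|α₁|, |α₂| ≤ κ`, the number
`Re(z(α₁ - α₂))` has absolute value at most `2/5 < 1/2`, so its distance to `ℤ` is its absolute
value. Restricting `‖z‖_α²` to this event and integrating first in `α₂` (control hypothesis with
`w = z α₁`) and then in `α₁` gives `‖z‖_α² ≥ Re(z)²/κ · 1/κ³`.
-/

open Metric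

lemma measurable_round_real : Measurable (fun x : ℝ => (round x : ℝ)) := by
  simp_rw [round_eq]
  exact measurable_from_top.comp (measurable_id.add_const _).floor

lemma abs_sub_round_of_abs_lt_half {x : ℝ} (hx : |x| < 1 / 2) : |x - round x| = |x| := by
  rw [round_eq_zero_iff.2 ⟨by linarith [neg_abs_le x], by linarith [le_abs_self x]⟩,
    Int.cast_zero, sub_zero]

lemma integrable_sq_abs_sub_round {X : Type*} [MeasurableSpace X] {μ : Measure X}
    [IsFiniteMeasure μ] {g : X → ℝ} (hg : Measurable g) :
    Integrable (fun x => |g x - round (g x)| ^ 2) μ := by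
  refine Integrable.of_bound
    ((hg.sub (measurable_round_real.comp hg)).abs.pow_const 2).aestronglyMeasurable ((1 / 2) ^ 2)
    (ae_of_all _ fun x => ?_)
  rw [Real.norm_eq_abs, abs_pow, abs_abs]
  exact pow_le_pow_left₀ (abs_nonneg (g x - round (g x))) (abs_sub_round _) 2

lemma mul_measureReal_le_setIntegral_prod {X Y : Type*} [MeasurableSpace X] [MeasurableSpace Y]
    {μ : Measure X} {ν : Measure Y} [IsFiniteMeasure μ] [SFinite ν] {s : Set X} {t : Set Y}
    {f : X × Y → ℝ} {m : ℝ} (hs : MeasurableSet s) (hf : IntegrableOn f (s ×ˢ t) (μ.prod ν))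
    (h : ∀ x ∈ s, m ≤ ∫ y in t, f (x, y) ∂ν) :
    m * μ.real s ≤ ∫ p in s ×ˢ t, f p ∂(μ.prod ν) := by
  rw [setIntegral_prod f hf]
  refine setIntegral_ge_of_const_le_real hs (measure_ne_top _ _) h ?_
  rw [IntegrableOn, ← Measure.prod_restrict] at hf
  exact hf.integral_prod_left

section

variable {ν : Measure ℂ} [IsFiniteMeasure ν] {R : ℝ}

lemma le_measureReal_closedBall_mul_sq {m : ℝ} (h : m ≤ ∫ a in closedBall 0 R, a.re ^ 2 ∂ν) :
    m ≤ ν.real (closedBall 0 R) * R ^ 2 := by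
  refine h.trans ?_
  rw [← smul_eq_mul, ← setIntegral_const]
  refine setIntegral_mono_on ?_ (integrableOn_const (measure_ne_top _ _)) measurableSet_closedBall
    fun a ha => ?_
  · exact (by fun_prop : Continuous fun a : ℂ => a.re ^ 2).continuousOn.integrableOn_compact
      (isCompact_closedBall 0 R)
  · rw [← sq_abs]
    exact pow_le_pow_left₀ (abs_nonneg _)
      ((Complex.abs_re_le_norm a).trans (mem_closedBall_zero_iff.1 ha)) 2

lemma abs_re_mul_sub_lt_half {z x y : ℂ} (hz : 4 * R * ‖z‖ < 1) (hx : x ∈ closedBall 0 R)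
    (hy : y ∈ closedBall 0 R) : |(z * (x - y)).re| < 1 / 2 := by
  rw [mem_closedBall_zero_iff] at hx hy
  calc |(z * (x - y)).re| ≤ ‖z‖ * (‖x‖ + ‖y‖) := by
        grw [Complex.abs_re_le_norm, norm_mul, norm_sub_le]
    _ ≤ ‖z‖ * (2 * R) := by gcongr; linarith
    _ < 1 / 2 := by linarith

lemma abs_re_div_sq_le_alphaNorm {κ : ℝ} (hκ : 0 < κ)
    (hctrl : ∀ z w : ℂ, z.re ^ 2 / κ ≤ ∫ a in closedBall 0 κ, (z * a - w).re ^ 2 ∂ν)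
    {z : ℂ} (hz : 4 * κ * ‖z‖ < 1) : |z.re| / κ ^ 2 ≤ alphaNorm ν z := by
  set B := closedBall (0 : ℂ) κ
  have hB : 1 / κ ^ 3 ≤ ν.real B := by
    have h := hctrl 1 0
    simp only [Complex.one_re, one_mul, sub_zero] at h
    replace h := le_measureReal_closedBall_mul_sq h
    rw [div_le_iff₀ (by positivity)]
    calc 1 = 1 ^ 2 / κ * κ := by field_simp
      _ ≤ ν.real B * κ ^ 2 * κ := by gcongr
      _ = ν.real B * κ ^ 3 := by ring
  have hint : IntegrableOn (fun p : ℂ × ℂ => (z * (p.1 - p.2)).re ^ 2) (B ×ˢ B) (ν.prod ν) :=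
    (by fun_prop : Continuous fun p : ℂ × ℂ => (z * (p.1 - p.2)).re ^ 2).continuousOn
      |>.integrableOn_compact ((isCompact_closedBall 0 κ).prod (isCompact_closedBall 0 κ))
  refine Real.le_sqrt_of_sq_le ?_
  calc (|z.re| / κ ^ 2) ^ 2 = z.re ^ 2 / κ * (1 / κ ^ 3) := by field_simp; rw [sq_abs]
    _ ≤ z.re ^ 2 / κ * ν.real B := by gcongr
    _ ≤ ∫ p in B ×ˢ B, (z * (p.1 - p.2)).re ^ 2 ∂(ν.prod ν) := by
      refine mul_measureReal_le_setIntegral_prod measurableSet_closedBall hint fun x _ => ?_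
      convert hctrl z (z * x) using 3 with y
      rw [← neg_sub, mul_neg, Complex.neg_re, neg_sq, mul_sub]
    _ = ∫ p in B ×ˢ B, |(z * (p.1 - p.2)).re - round (z * (p.1 - p.2)).re| ^ 2 ∂(ν.prod ν) := by
      refine setIntegral_congr_fun (measurableSet_closedBall.prod measurableSet_closedBall)
        fun p hp => ?_
      rw [abs_sub_round_of_abs_lt_half (abs_re_mul_sub_lt_half hz hp.1 hp.2), sq_abs]
    _ ≤ _ := setIntegral_le_integral (integrable_sq_abs_sub_round (by fun_prop))
      (ae_of_all _ fun _ => sq_nonneg _)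

end

lemma HasControlledSecondMoment.le_setIntegral_map {Ω : Type*} [MeasureSpace Ω] {α : Ω → ℂ}
    {κ : ℝ} (h : HasControlledSecondMoment α κ) (hα : Measurable α) (z w : ℂ) :
    z.re ^ 2 / κ ≤ ∫ a in closedBall 0 κ, (z * a - w).re ^ 2 ∂(Measure.map α ℙ) := by
  rw [setIntegral_map measurableSet_closedBall (by fun_prop) hα.aemeasurable]
  simpa only [Set.preimage, mem_closedBall_zero_iff] using h.2.2.2 z w

/-- **Lower bound on the `α`-norm near the origin** (Lemma 5.3 (iii)). -/
theorem alphaNorm_lower_bound (κ : ℝ) (hκ : 1 ≤ κ) :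
    ∃ c c' : ℝ, 0 < c ∧ 0 < c' ∧
      ∀ (Ω : Type) [MeasureSpace Ω], IsProbabilityMeasure (ℙ : Measure Ω) →
      ∀ α : Ω → ℂ, Measurable α → HasControlledSecondMoment α κ →
      ∀ z : ℂ, ‖z‖ ≤ c → c' * |z.re| ≤ alphaNorm (Measure.map α ℙ) z := by
  have hκ0 : 0 < κ := zero_lt_one.trans_le hκ
  refine ⟨1 / (5 * κ), 1 / κ ^ 2, by positivity, by positivity, ?_⟩
  intro Ω _ _ α hα hctrl z hz
  have hz' : 4 * κ * ‖z‖ < 1 := by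
    calc 4 * κ * ‖z‖ ≤ 4 * κ * (1 / (5 * κ)) := by gcongr
      _ < 1 := by field_simp; norm_num
  rw [one_div_mul_eq_div]
  exact abs_re_div_sq_le_alphaNorm hκ0 (hctrl.le_setIntegral_map hα) hz'
end
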